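/- arXiv:2104.04324 — 11 statements merged into one kernel-verified Lean document; each statement's English description precedes it below -/
import Mathlib

section
/- Let w be a word of odd length n such that for some rotation r with 0 < r < n, the rotation of w by r equals w^R. If additionally w = w^R, then w is periodic with period dividing gcd(2r, n), and since n is odd, w equals its rotation by r (i.e., w has period dividing gcd(r,n)). -/
namespace List

variable {α : Type*}

theorem iterate_rotate_one (w : List α) (k : ℕ) :
    (fun l : List α => l.rotate 1)^[k] w = w.rotate k := by
  induction k with
  | zero => simp
  | succ k ih => rw [Function.iterate_succ_apply', ih, rotate_rotate]

theorem isPeriodicPt_rotate_one_iff {w : List α} {k : ℕ} :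
    Function.IsPeriodicPt (fun l : List α => l.rotate 1) k w ↔ w.rotate k = w := by
  rw [Function.IsPeriodicPt, Function.IsFixedPt, iterate_rotate_one]

theorem rotate_gcd_length_eq_self {w : List α} {r : ℕ} (h : w.rotate r = w) :
    w.rotate (r.gcd w.length) = w :=
  isPeriodicPt_rotate_one_iff.mp <|
    (isPeriodicPt_rotate_one_iff.mpr h).gcd (isPeriodicPt_rotate_one_iff.mpr w.rotate_length)

end List

theorem odd_palindrome_rotation_period_general {α : Type*} (n r : ℕ) (hn : Odd n)
    (w : List α) (hw : w.length = n)
    (hrot : w.rotate r = w.reverse) (hpal : w.reverse = w) :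
    w.rotate (Nat.gcd (2 * r) n) = w ∧ w.rotate (Nat.gcd r n) = w ∧ w.rotate r = w := by
  have hr : w.rotate r = w := hrot.trans hpal
  have hgcd : w.rotate (Nat.gcd r n) = w := hw ▸ List.rotate_gcd_length_eq_self hr
  have hgcd_two : Nat.gcd (2 * r) n = Nat.gcd r n :=
    (Nat.coprime_two_left.mpr hn).gcd_mul_left_cancel r
  exact ⟨hgcd_two ▸ hgcd, hgcd, hr⟩

/-- If a palindrome `w` of odd length `n` satisfies `w.rotate r = w.reverse` for some
`0 < r < n`, then `w` is periodic with period dividing `gcd (2r) n`, and (since `n` is odd)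
`w` equals its rotation by `r` (period dividing `gcd r n`). -/
theorem odd_palindrome_rotation_period {α : Type*} [Fintype α] (n r : ℕ) (hn : Odd n)
    (w : List α) (hw : w.length = n) (hr0 : 0 < r) (hrn : r < n)
    (hrot : w.rotate r = w.reverse) (hpal : w.reverse = w) :
    w.rotate (Nat.gcd (2 * r) n) = w ∧ w.rotate (Nat.gcd r n) = w ∧ w.rotate r = w :=
  odd_palindrome_rotation_period_general n r hn w hw hrot hpal
end

section
/- If the necklace class (orbit under rotation) of a word w of odd length n is closed under reversal, then there is exactly one word u in the rotation orbit of w such that u = u^R. -/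
/-- Rotations by congruent amounts agree. -/
lemma rot_congr {α : Type*} (w : List α) {a b : ℕ}
    (h : a % w.length = b % w.length) : w.rotate a = w.rotate b := by
  rw [← List.rotate_mod w a, ← List.rotate_mod w b, h]

lemma rot_mul_fix {α : Type*} (u : List α) (s : ℕ) (h : u.rotate s = u) :
    ∀ m : ℕ, u.rotate (s * m) = u := by
  intro m
  induction m with
  | zero => simp
  | succ m ih =>
    have : s * (m + 1) = s * m + s := by ring
    rw [this, ← List.rotate_rotate, ih, h]

/-- Key uniqueness step: if `u` is a palindrome of odd length and `u.rotate t`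
is a palindrome, then `u.rotate t = u`. -/
lemma pal_rotate_pal {α : Type*} {n : ℕ} (hn : Odd n) (u : List α)
    (hu : u.length = n) (hpal : u.reverse = u) (t : ℕ)
    (hpt : (u.rotate t).reverse = u.rotate t) : u.rotate t = u := by
  have hnpos : 0 < n := hn.pos
  have ht : t % n < n := Nat.mod_lt _ hnpos
  have h1 : u.rotate (n - t % n) = u.rotate t := by
    rw [← hpt, List.reverse_rotate, hpal, hu]
  have h2 : u.rotate (2 * t) = u := by
    have e : u.rotate (t + t) = u.rotate (n - t % n + t) := by
      rw [← List.rotate_rotate, ← List.rotate_rotate, h1]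
    have hz : u.rotate (n - t % n + t) = u.rotate 0 := by
      apply rot_congr
      rw [hu]
      calc (n - t % n + t) % n = (n - t % n + t % n) % n := by
            exact (Nat.ModEq.add_left _ (Nat.mod_modEq t n)).symm
        _ = n % n := by rw [Nat.sub_add_cancel ht.le]
        _ = 0 % n := by simp
    have h2t : 2 * t = t + t := by ring
    rw [h2t, e, hz, List.rotate_zero]
  obtain ⟨k, hk⟩ := hn
  have hfix := rot_mul_fix u (2 * t) h2 (k + 1)
  have harith : 2 * t * (k + 1) = n * t + t := by rw [hk]; ring
  rw [harith] at hfix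
  calc u.rotate t = u.rotate (n * t + t) := by
        apply rot_congr
        rw [hu, Nat.add_comm (n * t) t, Nat.add_mul_mod_self_left]
    _ = u := hfix

/-- If the rotation orbit of a word of odd length is closed under reversal, then the
orbit contains exactly one palindrome. -/
theorem odd_palindromic_necklace_unique_palindrome {α : Type*} [Fintype α] (n : ℕ)
    (hn : Odd n) (w : List α) (hw : w.length = n)
    (hcl : ∀ u : List α, (∃ r, u = w.rotate r) → ∃ r', u.reverse = w.rotate r') :
    ∃! u : List α, (∃ r, u = w.rotate r) ∧ u.reverse = u := by
  have hnpos : 0 < n := hn.pos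
  obtain ⟨r, hr⟩ := hcl w ⟨0, by simp⟩
  obtain ⟨k, hk⟩ := hn
  set i := r * (k + 1) with hi
  set u := w.rotate i with hu
  have hm : i % n < n := Nat.mod_lt _ hnpos
  have hulen : u.length = n := by rw [hu, List.length_rotate, hw]
  have hupal : u.reverse = u := by
    rw [hu, List.reverse_rotate, hr, List.rotate_rotate, hw]
    apply rot_congr
    rw [hw]
    have step : (r + (n - i % n) + i % n) % n = (i + i % n) % n := by
      calc (r + (n - i % n) + i % n) % n = (r + n) % n := by
            congr 1; omega
        _ = r % n := Nat.add_mod_right r n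
        _ = (i + i) % n := by
            rw [show i + i = r + n * r from by rw [hi, hk]; ring,
              Nat.add_mul_mod_self_left]
        _ = (i + i % n) % n := Nat.ModEq.add_left i (Nat.mod_modEq i n).symm
    exact Nat.ModEq.add_right_cancel' (i % n) step
  refine ⟨u, ⟨⟨i, rfl⟩, hupal⟩, ?_⟩
  rintro y ⟨⟨j, rfl⟩, hypal⟩
  have hwu : w = u.rotate (n - i % n) := by
    rw [hu, List.rotate_rotate]
    nth_rewrite 1 [show w = w.rotate 0 from (List.rotate_zero w).symm]
    apply rot_congr
    rw [hw]
    calc 0 % n = (n : ℕ) % n := by simp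
      _ = (i % n + (n - i % n)) % n := by rw [Nat.add_sub_cancel' hm.le]
      _ = (i + (n - i % n)) % n := Nat.ModEq.add_right _ (Nat.mod_modEq i n)
  have hyu : w.rotate j = u.rotate (n - i % n + j) := by
    rw [← List.rotate_rotate, ← hwu]
  rw [hyu] at hypal ⊢
  exact pal_rotate_pal ⟨k, hk⟩ u hulen hupal _ hypal
end

section
/- The number of palindromic necklaces of odd length n over an alphabet of size k equals k^((n+1)/2). -/
open List

private lemma rotate_congr_mod {α : Type*} (l : List α) {a b : ℕ}
    (h : a % l.length = b % l.length) : l.rotate a = l.rotate b := by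
  rw [← List.rotate_mod, h, List.rotate_mod]

private lemma rotate_of_rotate_two {α : Type*} (l : List α) (hl : Odd l.length) (r : ℕ)
    (h : l.rotate (2 * r) = l) : l.rotate r = l := by
  obtain ⟨c, hc⟩ := hl
  have h1 : ∀ j, l.rotate (2 * r * j) = l := by
    intro j
    induction j with
    | zero => simp
    | succ j ih =>
      have e : 2 * r * (j + 1) = 2 * r * j + 2 * r := by ring
      rw [e, ← List.rotate_rotate, ih, h]
  have h2 := h1 (c + 1)
  have h3 : 2 * r * (c + 1) = l.length * r + r := by rw [hc]; ring
  rwa [h3, ← List.rotate_rotate, List.rotate_length_mul] at h2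

private lemma palindrome_rotate_eq {α : Type*} (p : List α) (hodd : Odd p.length)
    (hp : p.reverse = p) (r : ℕ) (hq : (p.rotate r).reverse = p.rotate r) :
    p.rotate r = p := by
  have hL : 0 < p.length := hodd.pos
  have ha : r % p.length < p.length := Nat.mod_lt _ hL
  rw [List.reverse_rotate, hp] at hq
  have h2 : (p.rotate (p.length - r % p.length)).rotate (r % p.length)
      = (p.rotate r).rotate (r % p.length) := by rw [hq]
  rw [List.rotate_rotate, List.rotate_rotate, Nat.sub_add_cancel ha.le,
    List.rotate_length] at h2
  have h3 : p.rotate (r + r % p.length) = p.rotate (2 * (r % p.length)) := by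
    apply rotate_congr_mod
    show Nat.ModEq p.length _ _
    calc r + r % p.length ≡ r % p.length + r % p.length [MOD p.length] :=
          Nat.ModEq.add_right _ (Nat.mod_modEq r p.length).symm
      _ = 2 * (r % p.length) := by ring
  have h5 : p.rotate (2 * (r % p.length)) = p := by rw [← h3, ← h2]
  have h6 := rotate_of_rotate_two p hodd (r % p.length) h5
  rwa [List.rotate_mod] at h6

private lemma exists_palindrome_rotate {α : Type*} (w : List α) (hodd : Odd w.length) (r : ℕ)
    (hrev : w.reverse = w.rotate r) :
    ∃ s, (w.rotate s).reverse = w.rotate s := by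
  have hL : 0 < w.length := hodd.pos
  obtain ⟨c, hc⟩ := hodd
  refine ⟨r * (c + 1), ?_⟩
  set s := r * (c + 1) with hs
  rw [List.reverse_rotate, hrev, List.rotate_rotate]
  apply rotate_congr_mod
  have ha : s % w.length < w.length := Nat.mod_lt _ hL
  have h2s : Nat.ModEq w.length (2 * s) r := by
    show (2 * s) % w.length = r % w.length
    have e : 2 * s = r + r * w.length := by rw [hs, hc]; ring
    rw [e, Nat.add_mul_mod_self_right]
  show Nat.ModEq w.length (r + (w.length - s % w.length)) s
  calc r + (w.length - s % w.length)
      ≡ 2 * s + (w.length - s % w.length) [MOD w.length] :=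
        Nat.ModEq.add_right _ h2s.symm
    _ ≡ 2 * (s % w.length) + (w.length - s % w.length) [MOD w.length] :=
        Nat.ModEq.add_right _ (Nat.ModEq.mul_left 2 (Nat.mod_modEq s w.length).symm)
    _ = s % w.length + w.length := by omega
    _ ≡ s % w.length [MOD w.length] := by
        show (s % w.length + w.length) % w.length = (s % w.length) % w.length
        rw [Nat.add_mod_right]
    _ ≡ s [MOD w.length] := Nat.mod_modEq s w.length

private lemma rotate_class_eq {α : Type*} (w : List α) (s : ℕ) :
    {u : List α | ∃ t, u = (w.rotate s).rotate t} = {u | ∃ t, u = w.rotate t} := by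
  rcases eq_or_ne w [] with rfl | hw
  · simp [List.rotate_nil]
  have hL : 0 < w.length := List.length_pos_iff.mpr hw
  ext u
  simp only [Set.mem_setOf_eq]
  constructor
  · rintro ⟨t, rfl⟩; exact ⟨s + t, by rw [List.rotate_rotate]⟩
  · rintro ⟨t, rfl⟩
    refine ⟨(w.length - s % w.length) + t, ?_⟩
    rw [List.rotate_rotate]
    apply (rotate_congr_mod w ?_).symm
    have e2 : w.length * (s / w.length + 1) = w.length * (s / w.length) + w.length := by ring
    have e : s + (w.length - s % w.length + t) = w.length * (s / w.length + 1) + t := by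
      have h1 := Nat.mod_lt s hL
      have h2 := Nat.div_add_mod s w.length
      omega
    rw [e, Nat.mul_add_mod]

private lemma pal_append {α : Type*} (l : List α) (hne : l ≠ []) :
    (l ++ l.reverse.tail).reverse = l ++ l.reverse.tail := by
  rcases h : l.reverse with _ | ⟨y, ys⟩
  · exact absurd (by simpa using congrArg List.reverse h) hne
  · have hl2 : l = ys.reverse ++ [y] := by
      have := congrArg List.reverse h
      simpa using this
    subst hl2
    simp [List.reverse_append]

/-- The number of palindromic necklaces of odd length `n` over an alphabet of size `k`
equals `k ^ ((n + 1) / 2)`. -/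
theorem count_odd_palindromic_necklaces (n k : ℕ) (hn : Odd n) :
    Nat.card {S : Set (List (Fin k)) //
        ∃ w : List (Fin k), w.length = n ∧ S = {u | ∃ r, u = w.rotate r} ∧
          ∀ u ∈ S, u.reverse ∈ S} = k ^ ((n + 1) / 2) := by
  obtain ⟨c, hc⟩ := hn
  set m := (n + 1) / 2 with hm
  have hmc : m = c + 1 := by omega
  have hmn : m ≤ n := by omega
  have hm1 : 1 ≤ m := by omega
  set P := {p : List (Fin k) // p.length = n ∧ p.reverse = p} with hP
  have cardP : Nat.card P = k ^ m := by
    have hlen : ∀ v : {v : List (Fin k) // v.length = m},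
        (v.1 ++ v.1.reverse.tail).length = n := by
      intro v
      simp only [List.length_append, List.length_tail, List.length_reverse, v.2]
      omega
    have hne : ∀ v : {v : List (Fin k) // v.length = m}, v.1 ≠ [] := by
      intro v h
      have := v.2
      rw [h] at this
      simp at this
      omega
    let g : {v : List (Fin k) // v.length = m} → P :=
      fun v => ⟨v.1 ++ v.1.reverse.tail, hlen v, pal_append v.1 (hne v)⟩
    have hg : Function.Bijective g := by
      constructor
      · rintro ⟨v1, hv1⟩ ⟨v2, hv2⟩ hgv
        have h12 : v1 ++ v1.reverse.tail = v2 ++ v2.reverse.tail :=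
          congrArg Subtype.val hgv
        exact Subtype.ext (List.append_inj h12 (by rw [hv1, hv2])).1
      · rintro ⟨p, hpl, hpr⟩
        refine ⟨⟨p.take m, by simp [List.length_take, hpl]; omega⟩, ?_⟩
        apply Subtype.ext
        show p.take m ++ (p.take m).reverse.tail = p
        have h1 : (p.take m).reverse = p.drop (m - 1) := by
          rw [List.reverse_take, hpr, hpl]
          congr 1
          omega
        rw [h1, List.tail_drop]
        have e : m - 1 + 1 = m := by omega
        rw [e, List.take_append_drop]
    rw [← Nat.card_eq_of_bijective g hg]
    have e : Nat.card {v : List (Fin k) // v.length = m}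
        = Nat.card (List.Vector (Fin k) m) := rfl
    rw [e, Nat.card_eq_fintype_card, card_vector, Fintype.card_fin]
  let f : P → {S : Set (List (Fin k)) //
      ∃ w : List (Fin k), w.length = n ∧ S = {u | ∃ r, u = w.rotate r} ∧
        ∀ u ∈ S, u.reverse ∈ S} :=
    fun p => ⟨{u | ∃ r, u = p.1.rotate r}, p.1, p.2.1, rfl, by
      rintro u ⟨r, rfl⟩
      refine ⟨p.1.length - r % p.1.length, ?_⟩
      rw [List.reverse_rotate, p.2.2]⟩
  have hf : Function.Bijective f := by
    constructor
    · rintro ⟨p, hpl, hpr⟩ ⟨q, hql, hqr⟩ hpq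
      have hsets : {u : List (Fin k) | ∃ r, u = p.rotate r} = {u | ∃ r, u = q.rotate r} :=
        congrArg Subtype.val hpq
      have hq : q ∈ {u : List (Fin k) | ∃ r, u = p.rotate r} := by
        rw [hsets]; exact ⟨0, by rw [List.rotate_zero]⟩
      obtain ⟨r, hr⟩ := hq
      have hodd : Odd p.length := by rw [hpl]; exact ⟨c, hc⟩
      have hqp := palindrome_rotate_eq p hodd hpr r (by rw [← hr]; exact hqr)
      apply Subtype.ext
      show p = q
      rw [hr, hqp]
    · rintro ⟨S, w, hwl, hS, hrev⟩
      have hodd : Odd w.length := by rw [hwl]; exact ⟨c, hc⟩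
      have hwmem : w ∈ S := by rw [hS]; exact ⟨0, by rw [List.rotate_zero]⟩
      obtain ⟨r, hr⟩ : ∃ r, w.reverse = w.rotate r := by
        have := hrev w hwmem
        rwa [hS] at this
      obtain ⟨s, hs⟩ := exists_palindrome_rotate w hodd r hr
      refine ⟨⟨w.rotate s, by rw [List.length_rotate, hwl], hs⟩, ?_⟩
      apply Subtype.ext
      show {u | ∃ t, u = (w.rotate s).rotate t} = S
      rw [rotate_class_eq, hS]
  rw [Nat.card_eq_of_bijective f hf] at cardP
  exact cardP
end

section
/- A necklace of even length n is palindromic if and only if it contains a word u of the form x φ y φ^R with x, y single symbols and φ a word of length n/2 - 1, or of the form φ φ^R with φ a word of length n/2. -/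
private lemma pal_even_decomp {α : Type*} {p : List α} (k : ℕ)
    (hp : p.reverse = p) (hl : p.length = 2 * k) :
    ∃ γ : List α, γ.length = k ∧ p = γ ++ γ.reverse := by
  refine ⟨p.take k, ?_, ?_⟩
  · rw [List.length_take, hl]; omega
  · have hsplit : p = p.take k ++ p.drop k := (List.take_append_drop k p).symm
    have hrev : (p.drop k).reverse ++ (p.take k).reverse = p.take k ++ p.drop k := by
      conv_lhs => rw [← List.reverse_append, ← hsplit, hp]
      exact hsplit
    have hlen : (p.drop k).reverse.length = (p.take k).length := by
      simp [hl]; omega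
    obtain ⟨h1, h2⟩ := List.append_inj hrev hlen
    conv_lhs => rw [hsplit, ← h2]

private lemma pal_odd_decomp {α : Type*} {p : List α} (k : ℕ)
    (hp : p.reverse = p) (hl : p.length = 2 * k + 1) :
    ∃ (γ : List α) (x : α), γ.length = k ∧ p = γ ++ [x] ++ γ.reverse := by
  have hk1 : (p.drop k).length = k + 1 := by rw [List.length_drop, hl]; omega
  obtain ⟨x, t, hxt⟩ : ∃ x t, p.drop k = x :: t := by
    cases h : p.drop k with
    | nil => simp [h] at hk1
    | cons a b => exact ⟨a, b, rfl⟩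
  refine ⟨p.take k, x, ?_, ?_⟩
  · rw [List.length_take, hl]; omega
  · have hsplit : p = p.take k ++ ([x] ++ t) := by
      conv_lhs => rw [← List.take_append_drop k p, hxt]
      simp
    have ht : t.length = k := by
      have := hk1; rw [hxt] at this; simpa using this
    have hrev : t.reverse ++ ([x] ++ (p.take k).reverse) = p.take k ++ ([x] ++ t) := by
      conv_lhs => rw [show t.reverse ++ ([x] ++ (p.take k).reverse)
          = (p.take k ++ ([x] ++ t)).reverse by simp, ← hsplit, hp]
      exact hsplit
    have hlen : t.reverse.length = (p.take k).length := by simp [hl, ht]; omega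
    obtain ⟨h1, h2⟩ := List.append_inj hrev hlen
    have ht2 : t = (p.take k).reverse := by rw [← h1]; simp
    conv_lhs => rw [hsplit, ht2]
    simp

/-- A necklace of even length `n ≥ 2` is palindromic iff its orbit contains a word of the
form `x φ y φ.reverse` (with `|φ| = n/2 - 1`) or of the form `φ ++ φ.reverse`
(with `|φ| = n/2`). -/
theorem even_palindromic_necklace_iff {α : Type*} [Fintype α] (n : ℕ) (hn : Even n)
    (hn2 : 2 ≤ n) (w : List α) (hw : w.length = n) :
    (∀ u : List α, (∃ r, u = w.rotate r) → ∃ r', u.reverse = w.rotate r') ↔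
      ∃ u : List α, (∃ r, u = w.rotate r) ∧
        ((∃ (x y : α) (φ : List α), φ.length = n / 2 - 1 ∧
            u = [x] ++ φ ++ [y] ++ φ.reverse) ∨
         (∃ φ : List α, φ.length = n / 2 ∧ u = φ ++ φ.reverse)) := by
  have hwlen : 0 < w.length := by omega
  constructor
  · intro h
    obtain ⟨r', hr'⟩ := h w ⟨0, by simp⟩
    set r := r' % w.length with hrdef
    have hr : w.reverse = w.rotate r := by rw [hrdef, List.rotate_mod]; exact hr'
    have hrlt : r < w.length := Nat.mod_lt _ hwlen
    set a := w.take r with ha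
    set b := w.drop r with hb
    have hab : w = a ++ b := (List.take_append_drop r w).symm
    have hrot : w.rotate r = b ++ a := List.rotate_eq_drop_append_take hrlt.le
    have hba : b.reverse ++ a.reverse = b ++ a := by
      conv_lhs => rw [← List.reverse_append, ← hab, hr]
      exact hrot
    have hlenb : b.reverse.length = b.length := by simp
    obtain ⟨hbpal, hapal⟩ := List.append_inj hba hlenb
    have halen : a.length = r := by simp [ha]; omega
    have hblen : b.length = w.length - r := by simp [hb]
    have hpar : a.length + b.length = n := by omega
    rcases Nat.even_or_odd a.length with hae | hao
    · obtain ⟨ka, hka⟩ := hae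
      have hbe : Even b.length := by
        rcases hn with ⟨m, hm⟩; exact ⟨m - ka, by omega⟩
      obtain ⟨kb, hkb⟩ := hbe
      obtain ⟨γ, hγ, hγeq⟩ := pal_even_decomp ka hapal (by omega)
      obtain ⟨δ, hδ, hδeq⟩ := pal_even_decomp kb hbpal (by omega)
      set φ : List α := δ.reverse ++ γ with hφ
      have hiso : w ~r (φ ++ φ.reverse) := by
        have hw2 : w = (γ ++ γ.reverse ++ δ) ++ δ.reverse := by
          rw [hab, hγeq, hδeq]; simp
        have heq : φ ++ φ.reverse = δ.reverse ++ (γ ++ γ.reverse ++ δ) := by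
          rw [hφ]; simp
        rw [hw2, heq]
        exact List.isRotated_append
      obtain ⟨m, hm⟩ := hiso
      refine ⟨φ ++ φ.reverse, ⟨m, hm.symm⟩, Or.inr ⟨φ, ?_, rfl⟩⟩
      simp only [hφ, List.length_append, List.length_reverse, hγ, hδ]
      omega
    · obtain ⟨ka, hka⟩ := hao
      have hbo : Odd b.length := by
        rcases Nat.even_or_odd b.length with hbe | hbo
        · exfalso
          rcases hn with ⟨m, hm⟩
          rcases hbe with ⟨mb, hmb⟩
          omega
        · exact hbo
      obtain ⟨kb, hkb⟩ := hbo
      obtain ⟨γ, x, hγ, hγeq⟩ := pal_odd_decomp ka hapal (by omega)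
      obtain ⟨δ, y, hδ, hδeq⟩ := pal_odd_decomp kb hbpal (by omega)
      set φ : List α := γ.reverse ++ δ with hφ
      have hiso : w ~r ([x] ++ φ ++ [y] ++ φ.reverse) := by
        have hw2 : w = γ ++ ([x] ++ γ.reverse ++ δ ++ [y] ++ δ.reverse) := by
          rw [hab, hγeq, hδeq]; simp
        have heq : [x] ++ φ ++ [y] ++ φ.reverse
            = ([x] ++ γ.reverse ++ δ ++ [y] ++ δ.reverse) ++ γ := by
          rw [hφ]; simp
        rw [hw2, heq]
        exact List.isRotated_append
      obtain ⟨m, hm⟩ := hiso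
      refine ⟨[x] ++ φ ++ [y] ++ φ.reverse, ⟨m, hm.symm⟩,
        Or.inl ⟨x, y, φ, ?_, rfl⟩⟩
      simp only [hφ, List.length_append, List.length_reverse, hγ, hδ]
      omega
  · rintro ⟨u, ⟨r, hur⟩, hform⟩
    have huw : w ~r u := ⟨r, hur.symm⟩
    have huru : u.reverse ~r u := by
      rcases hform with ⟨x, y, φ, _, hue⟩ | ⟨φ, _, hue⟩
      · have h1 : u.reverse = (φ ++ [y] ++ φ.reverse) ++ [x] := by
          rw [hue]; simp
        have h2 : u = [x] ++ (φ ++ [y] ++ φ.reverse) := by rw [hue]; simp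
        rw [h1, h2]
        exact List.isRotated_append
      · have : u.reverse = u := by rw [hue]; simp
        rw [this]
    intro v ⟨s, hvs⟩
    have hvw : v ~r w := by
      rw [hvs]; exact List.IsRotated.symm ⟨s, rfl⟩
    have hchain : w ~r v.reverse :=
      huw.trans (huru.symm.trans ((hvw.trans huw).reverse.symm))
    obtain ⟨m, hm⟩ := hchain
    exact ⟨m, hm.symm⟩
end

section
/- A word u of length n ≥ 2 equals both x φ y φ^R (for some symbols x,y and word φ of length n/2 - 1) and ψ ψ^R (for some word ψ of length n/2) if and only if u = x^n for some symbol x (u is constant). -/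
lemma comm_single_replicate {α : Type*} (x : α) :
    ∀ w : List α, x :: w = w ++ [x] → w = List.replicate w.length x := by
  intro w
  induction w with
  | nil => simp
  | cons a t ih =>
    intro h
    simp only [List.cons_append, List.cons.injEq] at h
    obtain ⟨rfl, h⟩ := h
    have := ih h
    simp [List.replicate_succ, ← this]

/-- A word `u` of even length `n ≥ 2` has both forms `x φ y φ.reverse` and `ψ ++ ψ.reverse`
iff it is constant. -/
theorem both_even_forms_iff_constant {α : Type*} [Fintype α] (n : ℕ) (hn : Even n)
    (hn2 : 2 ≤ n) (u : List α) (hu : u.length = n) :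
    ((∃ (x y : α) (φ : List α), φ.length = n / 2 - 1 ∧ u = [x] ++ φ ++ [y] ++ φ.reverse) ∧
     (∃ ψ : List α, ψ.length = n / 2 ∧ u = ψ ++ ψ.reverse)) ↔
      ∃ x : α, u = List.replicate n x := by
  obtain ⟨m, rfl⟩ := hn
  have hm : 1 ≤ m := by omega
  have hdiv : (m + m) / 2 = m := by omega
  constructor
  · rintro ⟨⟨x, y, φ, hφ, hu1⟩, ⟨ψ, hψ, hu2⟩⟩
    refine ⟨x, ?_⟩
    have hpal : u.reverse = u := by
      rw [hu2]; simp
    have hw : x :: (φ ++ [y] ++ φ.reverse) = (φ ++ [y] ++ φ.reverse) ++ [x] := by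
      have := hpal
      rw [hu1] at this
      simp only [List.reverse_append, List.reverse_cons, List.reverse_nil,
        List.reverse_reverse, List.nil_append, List.append_assoc] at this ⊢
      simpa using this.symm
    have hrep := comm_single_replicate x _ hw
    have hlen : (φ ++ [y] ++ φ.reverse).length = m + m - 1 := by
      simp [hφ, hdiv]; omega
    rw [hu1]
    rw [hlen] at hrep
    simp only [List.cons_append, List.nil_append] at hrep ⊢
    rw [hrep]
    have : m + m = (m + m - 1) + 1 := by omega
    rw [this, List.replicate_succ]
    simp
  · rintro ⟨x, rfl⟩
    refine ⟨⟨x, x, List.replicate (m - 1) x, by simp [hdiv], ?_⟩,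
      ⟨List.replicate m x, by simp [hdiv], ?_⟩⟩
    · rw [List.reverse_replicate]
      have : m + m = 1 + (m - 1) + (1 + (m - 1)) := by omega
      rw [this]
      simp [List.replicate_add, List.replicate_succ]
    · rw [List.reverse_replicate, ← List.replicate_add]
end

section
/- Let w be a word of even length n such that w = x φ y φ^R for a symbol x, symbol y, and word φ, with x φ ≠ y φ^R. Then the rotation orbit of w contains exactly two words of the form a ψ b ψ^R, namely w and its rotation by n/2. -/
private theorem rotate_one_iter {α : Type*} (l : List α) :
    ∀ k, (fun t : List α => t.rotate 1)^[k] l = l.rotate k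
  | 0 => by simp
  | k + 1 => by
    rw [Function.iterate_succ_apply', rotate_one_iter l k]
    exact List.rotate_rotate l k 1

private theorem rotate_mul_period {α : Type*} {l : List α} {d : ℕ} (h : l.rotate d = l) :
    ∀ k, l.rotate (d * k) = l
  | 0 => by simp
  | k + 1 => by
    rw [Nat.mul_succ, ← List.rotate_rotate, rotate_mul_period h k, h]

private theorem rotate_mod_period {α : Type*} {l : List α} {d : ℕ} (h : l.rotate d = l) (k : ℕ) :
    l.rotate k = l.rotate (k % d) := by
  conv_lhs => rw [← Nat.div_add_mod k d]
  rw [← List.rotate_rotate, rotate_mul_period h]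

private theorem form_rev {α : Type*} (a b : α) (ψ : List α) :
    ([a] ++ ψ ++ [b] ++ ψ.reverse).reverse = ([a] ++ ψ ++ [b] ++ ψ.reverse).rotate 1 := by
  have h : [a] ++ ψ ++ [b] ++ ψ.reverse = a :: (ψ ++ [b] ++ ψ.reverse) := by simp
  rw [h, show (1 : ℕ) = 0 + 1 from rfl, List.rotate_cons_succ, List.rotate_zero]
  simp

/-- If `w = x φ y φ.reverse` with `x·φ ≠ y·φ.reverse`, then the rotation orbit of `w`
contains exactly two words of the form `a ψ b ψ.reverse`, namely `w` and its rotation by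
`n / 2`, which are distinct. -/
theorem even_form2_exactly_two {α : Type*} [Fintype α] (n : ℕ) (hn : Even n) (hn2 : 2 ≤ n)
    (w : List α) (hw : w.length = n) (x y : α) (φ : List α) (hφ : φ.length = n / 2 - 1)
    (hwform : w = [x] ++ φ ++ [y] ++ φ.reverse) (hne : [x] ++ φ ≠ [y] ++ φ.reverse) :
    {u : List α | (∃ r, u = w.rotate r) ∧
        ∃ (a b : α) (ψ : List α), ψ.length = n / 2 - 1 ∧
          u = [a] ++ ψ ++ [b] ++ ψ.reverse} = {w, w.rotate (n / 2)} ∧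
      w.rotate (n / 2) ≠ w := by
  obtain ⟨k, hk⟩ := hn
  have hm2 : n = 2 * (n / 2) := by omega
  set m := n / 2 with hmdef
  have hm1 : 1 ≤ m := by omega
  have hn0 : 0 < n := by omega
  have hAB : w = ([x] ++ φ) ++ ([y] ++ φ.reverse) := by rw [hwform]; simp
  have hAlen : ([x] ++ φ).length = m := by simp [hφ]; omega
  have hBlen : ([y] ++ φ.reverse).length = m := by simp [hφ]; omega
  have hrotm : w.rotate m = ([y] ++ φ.reverse) ++ ([x] ++ φ) := by
    rw [List.rotate_eq_drop_append_take (by omega : m ≤ w.length), hAB,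
      List.drop_left' hAlen, List.take_left' hAlen]
  have hnm : w.rotate m ≠ w := by
    intro h
    rw [hrotm, hAB] at h
    have h2 := congrArg (List.take m) h
    rw [List.take_left' hBlen, List.take_left' hAlen] at h2
    exact hne h2.symm
  have hsym : w.reverse = w.rotate 1 := by rw [hwform]; exact form_rev x y φ
  have hperN : w.rotate n = w := by rw [← hw]; exact List.rotate_length w
  have key : ∀ r : ℕ, (w.rotate r).reverse = (w.rotate r).rotate 1 →
      w.rotate r = w ∨ w.rotate r = w.rotate m := by
    intro r hu
    set s := r % n with hs
    have hsn : s < n := Nat.mod_lt _ hn0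
    have h1 : (w.rotate r).reverse = w.rotate (1 + (n - s)) := by
      rw [List.reverse_rotate, hw, hsym, List.rotate_rotate, ← hs]
    have h2 : (w.rotate r).rotate 1 = w.rotate (r + 1) := List.rotate_rotate w r 1
    have heq : w.rotate (1 + (n - s)) = w.rotate (r + 1) := by rw [← h1, ← h2, hu]
    have heq2 := congrArg (fun t : List α => t.rotate (n - 1 + s)) heq
    simp only [List.rotate_rotate] at heq2
    have e1 : 1 + (n - s) + (n - 1 + s) = n * 2 := by omega
    have e2 : r + 1 + (n - 1 + s) = n * (r / n + 1) + 2 * s := by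
      have hq := Nat.div_add_mod r n
      rw [Nat.mul_add, Nat.mul_one]
      omega
    rw [e1, e2, rotate_mul_period hperN, ← List.rotate_rotate,
      rotate_mul_period hperN] at heq2
    have hper : w.rotate (2 * s) = w := heq2.symm
    have hpa : Function.IsPeriodicPt (fun t : List α => t.rotate 1) (2 * s) w := by
      unfold Function.IsPeriodicPt Function.IsFixedPt
      rw [rotate_one_iter]; exact hper
    have hpb : Function.IsPeriodicPt (fun t : List α => t.rotate 1) n w := by
      unfold Function.IsPeriodicPt Function.IsFixedPt
      rw [rotate_one_iter]; exact hperN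
    have hpd := hpa.gcd hpb
    set d := Nat.gcd (2 * s) n with hd
    have hdw : w.rotate d = w := by
      unfold Function.IsPeriodicPt Function.IsFixedPt at hpd
      rwa [rotate_one_iter] at hpd
    have hds : d ∣ 2 * s := Nat.gcd_dvd_left _ _
    have hdn : d ∣ n := Nat.gcd_dvd_right _ _
    have hd0 : 0 < d := Nat.gcd_pos_of_pos_right _ hn0
    have hdm : ¬ d ∣ m := by
      rintro ⟨c, hc⟩
      exact hnm (by rw [hc]; exact rotate_mul_period hdw c)
    have hdvd2 : ∀ t : ℕ, d ∣ 2 * t → 2 * (t % d) = 0 ∨ 2 * (t % d) = d := by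
      intro t ht
      have hdvd : d ∣ 2 * (t % d) := by
        have h3 : 2 * (t % d) = 2 * t - 2 * (d * (t / d)) := by
          have := Nat.div_add_mod t d
          omega
        rw [h3]
        exact Nat.dvd_sub ht ((Dvd.intro (t / d) rfl).mul_left 2)
      obtain ⟨c, hc⟩ := hdvd
      have hlt : t % d < d := Nat.mod_lt _ hd0
      have hc2 : c < 2 := by
        by_contra hcon
        push_neg at hcon
        have : d * 2 ≤ d * c := Nat.mul_le_mul_left d hcon
        omega
      interval_cases c <;> omega
    have hd2m : d ∣ 2 * m := hm2 ▸ hdn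
    have hrs : w.rotate r = w.rotate s := by
      rw [hs, ← hw]
      exact (List.rotate_mod w r).symm
    rcases hdvd2 s hds with h0 | h1
    · left
      have hs0 : s % d = 0 := by omega
      rw [hrs, rotate_mod_period hdw s, hs0, List.rotate_zero]
    · rcases hdvd2 m hd2m with hm0 | hm1
      · exact absurd (Nat.dvd_of_mod_eq_zero (by omega)) hdm
      · right
        have hsm : s % d = m % d := by omega
        rw [hrs, rotate_mod_period hdw s, hsm, ← rotate_mod_period hdw m]
  refine ⟨?_, hnm⟩
  ext u
  simp only [Set.mem_setOf_eq, Set.mem_insert_iff, Set.mem_singleton_iff]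
  constructor
  · rintro ⟨⟨r, rfl⟩, a, b, ψ, hψ, hform⟩
    have hrev : (w.rotate r).reverse = (w.rotate r).rotate 1 := by
      rw [hform]; exact form_rev a b ψ
    exact key r hrev
  · rintro (h | h)
    · exact ⟨⟨0, by rw [h, List.rotate_zero]⟩, x, y, φ, hφ, by rw [h, hwform]⟩
    · refine ⟨⟨m, h⟩, y, x, φ.reverse, by simp [hφ], ?_⟩
      rw [h, hrotm]; simp
end

section
/- Let v be a fixed word and let w be a word with |w| < |v|. Let s be the lexicographically largest subword of v of length |w| with s ≤ w (the bound of w), and let x be a symbol. Then a subword s' of v of length |w|+1 bounds x·w if and only if s' bounds x·s. -/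
/-- `s` is a cyclic subword of `v` of length `m`. -/
def IsCycSub {α : Type*} (v : List α) (m : ℕ) (s : List α) : Prop :=
  s.length = m ∧ ∃ i < v.length, s = (v.rotate i).take m

/-- `s` bounds `w` among the cyclic subwords of `v` of length `m`. -/
def Bounds {α : Type*} [LinearOrder α] (v : List α) (m : ℕ) (s w : List α) : Prop :=
  IsCycSub v m s ∧ s ≤ w ∧ ¬ ∃ u : List α, IsCycSub v m u ∧ s < u ∧ u ≤ w

lemma my_cons_le_cons_iff {α : Type*} [LinearOrder α] {a b : α} {l m : List α} :
    a :: l ≤ b :: m ↔ a < b ∨ (a = b ∧ l ≤ m) := by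
  constructor
  · intro h
    rcases lt_or_eq_of_le h with h | h
    · cases (h : List.Lex (· < ·) (a :: l) (b :: m)) with
      | rel h => exact Or.inl h
      | cons h => exact Or.inr ⟨rfl, le_of_lt h⟩
    · injection h with h1 h2
      exact Or.inr ⟨h1, le_of_eq h2⟩
  · rintro (h | ⟨rfl, h⟩)
    · exact le_of_lt (List.Lex.rel h)
    · exact List.cons_le_cons _ h

lemma tail_cycSub {α : Type*} {v : List α} {m : ℕ} (hm : m < v.length) {u : List α}
    (hu : IsCycSub v (m + 1) u) : IsCycSub v m u.tail := by
  obtain ⟨hlen, i, hi, rfl⟩ := hu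
  refine ⟨by simp [List.length_tail, hlen], (i + 1) % v.length,
    Nat.mod_lt _ (by omega), ?_⟩
  rw [List.rotate_mod, ← List.rotate_rotate]
  rcases h : v.rotate i with _ | ⟨a, t⟩
  · exfalso
    have := List.length_rotate v i
    rw [h] at this
    simp at this; omega
  · have ht : t.length = v.length - 1 := by
      have := List.length_rotate v i
      rw [h] at this; simpa using this.symm ▸ rfl
    have htm : m ≤ t.length := by
      have := List.length_rotate v i
      rw [h] at this; simp at this; omega
    simp only [List.take_succ_cons, List.tail_cons]
    rw [show (a :: t).rotate 1 = t ++ [a] by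
      simpa using List.rotate_cons_succ t a 0]
    rw [List.take_append_of_le_length htm]

lemma nonempty_of_cycSub {α : Type*} {v : List α} {m : ℕ} {u : List α}
    (hu : IsCycSub v (m + 1) u) : u ≠ [] := by
  intro h; rw [h] at hu; exact absurd hu.1 (by simp)

/-- If `s` bounds `w`, then `s'` bounds `x·w` iff `s'` bounds `x·s`. -/
theorem bounding_same_xw {α : Type*} [Fintype α] [LinearOrder α]
    (v w : List α) (hlen : w.length < v.length) (s : List α)
    (hb : Bounds v w.length s w) (x : α) (s' : List α) :
    Bounds v (w.length + 1) s' (x :: w) ↔ Bounds v (w.length + 1) s' (x :: s) := by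
  obtain ⟨hs, hsw, hmax⟩ := hb
  -- Key: any cyclic subword t of length |w| satisfies t ≤ w ↔ t ≤ s
  have key : ∀ t : List α, IsCycSub v w.length t → (t ≤ w ↔ t ≤ s) := by
    intro t ht
    constructor
    · intro htw
      by_contra h
      exact hmax ⟨t, ht, lt_of_not_ge h, htw⟩
    · intro hts; exact le_trans hts hsw
  -- lift to length |w|+1 against x :: w vs x :: s
  have key' : ∀ u : List α, IsCycSub v (w.length + 1) u →
      (u ≤ x :: w ↔ u ≤ x :: s) := by
    intro u hu
    obtain ⟨y, t, rfl⟩ := List.exists_cons_of_ne_nil (nonempty_of_cycSub hu)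
    have ht : IsCycSub v w.length t := by
      simpa using tail_cycSub hlen hu
    rw [my_cons_le_cons_iff, my_cons_le_cons_iff, key t ht]
  constructor <;> rintro ⟨h1, h2, h3⟩
  · refine ⟨h1, (key' s' h1).mp h2, fun ⟨u, hu, hlt, hle⟩ =>
      h3 ⟨u, hu, hlt, (key' u hu).mpr hle⟩⟩
  · refine ⟨h1, (key' s' h1).mpr h2, fun ⟨u, hu, hlt, hle⟩ =>
      h3 ⟨u, hu, hlt, (key' u hu).mp hle⟩⟩
end

section
/- Let v be a fixed word, w and u words of equal length strictly bounded by the same subword s of v, and x a symbol. Then the subword s' of v of length |w|+1 that bounds w·x also bounds u·x. -/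
/-- `s` strictly bounds `w` among the cyclic subwords of `v` of length `m`. -/
def SBounds {α : Type*} [LinearOrder α] (v : List α) (m : ℕ) (s w : List α) : Prop :=
  IsCycSub v m s ∧ s < w ∧ ¬ ∃ u : List α, IsCycSub v m u ∧ s < u ∧ u ≤ w

private lemma append_lt_append {α : Type*} [LinearOrder α] :
    ∀ (p q : List α), p.length = q.length → p < q → ∀ r r' : List α, p ++ r < q ++ r'
  | [], [], _, hlt, _, _ => absurd hlt (lt_irrefl _)
  | [], _ :: _, h, _, _, _ => by simp at h
  | _ :: _, [], h, _, _, _ => by simp at h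
  | a :: p, b :: q, h, hlt, r, r' => by
      have hlt' : List.Lex (· < ·) (a :: p) (b :: q) := hlt
      show List.Lex (· < ·) (a :: (p ++ r)) (b :: (q ++ r'))
      cases hlt' with
      | cons h' => exact List.Lex.cons (append_lt_append p q (by simpa using h) h' r r')
      | rel hab => exact List.Lex.rel hab

private lemma key_le {α : Type*} [LinearOrder α] (v w u : List α) (hlen : w.length = u.length)
    (s : List α) (hw : SBounds v w.length s w) (hu : SBounds v u.length s u)
    (x : α) (t : List α) (ht : IsCycSub v (w.length + 1) t) (hle : t ≤ w ++ [x]) :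
    t ≤ u ++ [x] := by
  obtain ⟨htl, i, hi, hti⟩ := ht
  have htne : t ≠ [] := by intro hnil; simp [hnil] at htl
  set t' := t.dropLast with ht'
  have htlen' : t'.length = w.length := by simp [ht', htl]
  have ht'take : t' = t.take w.length := by
    rw [ht', List.dropLast_eq_take, htl, Nat.add_sub_cancel]
  have ht'sub : IsCycSub v w.length t' := by
    refine ⟨htlen', i, hi, ?_⟩
    rw [ht'take, hti, List.take_take, Nat.min_eq_left (Nat.le_succ _)]
  have hdecomp : t = t' ++ [t.getLast htne] := (List.dropLast_append_getLast htne).symm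
  have hle' : t' ≤ w := by
    by_contra hcon
    push_neg at hcon
    have hlt := append_lt_append w t' htlen'.symm hcon [x] [t.getLast htne]
    rw [← hdecomp] at hlt
    exact absurd hle hlt.not_ge
  rcases hle'.lt_or_eq with hlt | heq
  · have hts : t' ≤ s := by
      by_contra hcon
      push_neg at hcon
      exact hw.2.2 ⟨t', ht'sub, hcon, hlt.le⟩
    have htu : t' < u := lt_of_le_of_lt hts (hu.2.1)
    calc t = t' ++ [t.getLast htne] := hdecomp
    _ ≤ u ++ [x] := (append_lt_append t' u (htlen'.trans hlen) htu _ _).le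
  · exact absurd ⟨t', ht'sub, heq ▸ hw.2.1, heq.le⟩ hw.2.2

/-- If `w` and `u` have the same length and are both strictly bounded by `s`, then the
word `s'` bounding `w ++ [x]` also bounds `u ++ [x]`. -/
theorem bounding_same_wx {α : Type*} [Fintype α] [LinearOrder α]
    (v w u : List α) (hlen : w.length = u.length) (s : List α)
    (hw : SBounds v w.length s w) (hu : SBounds v u.length s u) (x : α) (s' : List α)
    (h : Bounds v (w.length + 1) s' (w ++ [x])) :
    Bounds v (u.length + 1) s' (u ++ [x]) := by
  obtain ⟨hs'sub, hs'le, hs'max⟩ := h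
  rw [← hlen]
  refine ⟨hs'sub, key_le v w u hlen s hw hu x s' hs'sub hs'le, ?_⟩
  rintro ⟨t, htsub, hs't, htle⟩
  exact hs'max ⟨t, htsub, hs't,
    key_le v u w hlen.symm s hu hw x t (hlen ▸ htsub) htle⟩
end

section
/- Let v be a word, w a word strictly bounded by subword s of v, and x a symbol. If s' bounds w·x among subwords of v of length |w|+1, then either s' bounds s·x, or s' = s·y for some symbol y > x. -/
section Aux
variable {α : Type*} [LinearOrder α]

theorem lex_take {l₁ l₂ : List α} (h : List.Lex (· < ·) l₁ l₂) (n : ℕ) :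
    List.Lex (· < ·) (l₁.take n) (l₂.take n) ∨ l₁.take n = l₂.take n := by
  induction h generalizing n with
  | nil =>
    cases n with
    | zero => right; rfl
    | succ n => left; exact List.Lex.nil
  | @cons a l₁ l₂ _ ih =>
    cases n with
    | zero => right; rfl
    | succ n =>
      rcases ih n with h' | h'
      · left; exact List.Lex.cons h'
      · right; simp [h']
  | rel hab =>
    cases n with
    | zero => right; rfl
    | succ n => left; exact List.Lex.rel hab

theorem lex_append {l₁ l₂ : List α} (hlen : l₁.length = l₂.length)
    (h : List.Lex (· < ·) l₁ l₂) (t₁ t₂ : List α) :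
    List.Lex (· < ·) (l₁ ++ t₁) (l₂ ++ t₂) := by
  induction h with
  | nil => simp at hlen
  | @cons a l₁ l₂ _ ih =>
    simp only [List.length_cons, Nat.succ_inj] at hlen
    exact List.Lex.cons (ih hlen)
  | rel hab => exact List.Lex.rel hab

theorem list_lt_iff_lex {l₁ l₂ : List α} : l₁ < l₂ ↔ List.Lex (· < ·) l₁ l₂ := Iff.rfl

theorem list_le_iff {l₁ l₂ : List α} : l₁ ≤ l₂ ↔ List.Lex (· < ·) l₁ l₂ ∨ l₁ = l₂ :=
  le_iff_lt_or_eq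

theorem take_le_take {l₁ l₂ : List α} (h : l₁ ≤ l₂) (n : ℕ) : l₁.take n ≤ l₂.take n := by
  rcases list_le_iff.1 h with h | rfl
  · exact list_le_iff.2 (lex_take h n)
  · exact le_rfl

theorem lt_append {l₁ l₂ : List α} (hlen : l₁.length = l₂.length)
    (h : l₁ < l₂) (t₁ t₂ : List α) : l₁ ++ t₁ < l₂ ++ t₂ :=
  lex_append hlen h t₁ t₂

theorem append_singleton_le {l : List α} {y x : α} (h : y ≤ x) : l ++ [y] ≤ l ++ [x] := by
  rcases lt_or_eq_of_le h with h | rfl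
  · exact le_of_lt (List.Lex.append_left _ (List.Lex.rel h) l)
  · exact le_rfl

end Aux

/-- If `s` strictly bounds `w` and `s'` bounds `w ++ [x]`, then either `s'` bounds
`s ++ [x]`, or `s' = s ++ [y]` for some symbol `y > x`. -/
theorem wx_part_one {α : Type*} [Fintype α] [LinearOrder α]
    (v w s : List α) (hw : SBounds v w.length s w) (x : α) (s' : List α)
    (h : Bounds v (w.length + 1) s' (w ++ [x])) :
    Bounds v (w.length + 1) s' (s ++ [x]) ∨ ∃ y : α, x < y ∧ s' = s ++ [y] := by
  obtain ⟨⟨hslen, _⟩, hsw, hsmax⟩ := hw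
  obtain ⟨⟨hlen, i, hi, hrot⟩, hle, hmax⟩ := h
  set m := w.length with hm
  -- the prefix t of s' of length m is a cyclic subword of v of length m
  set t := s'.take m with ht
  have htlen : t.length = m := by
    rw [ht, List.length_take, hlen]; omega
  have htsub : IsCycSub v m t := by
    refine ⟨htlen, i, hi, ?_⟩
    rw [ht, hrot, List.take_take]
    congr 1
    omega
  -- t ≤ w
  have htw : t ≤ w := by
    have := take_le_take hle m
    rwa [← ht, List.take_append_of_le_length (le_refl m), List.take_length] at this
  -- hence t ≤ s (else s < t ≤ w contradicts hsmax)
  have hts : t ≤ s := by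
    by_contra hc
    exact hsmax ⟨t, htsub, lt_of_not_ge hc, htw⟩
  -- s' = t ++ [y]
  obtain ⟨y, hy⟩ : ∃ y, s' = t ++ [y] := by
    have h1 : s' = s'.take m ++ s'.drop m := (List.take_append_drop m s').symm
    have h2 : (s'.drop m).length = 1 := by rw [List.length_drop, hlen]; omega
    obtain ⟨z, hz⟩ := List.length_eq_one_iff.1 h2
    rw [hz] at h1
    exact ⟨z, by rw [ht]; exact h1⟩
  -- s ++ [x] ≤ w ++ [x]
  have hsx : s ++ [x] ≤ w ++ [x] := le_of_lt (lt_append hslen hsw _ _)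
  -- maximality for s ++ [x]
  have hmax' : ¬ ∃ u : List α, IsCycSub v (m + 1) u ∧ s' < u ∧ u ≤ s ++ [x] := by
    rintro ⟨u, hu, hsu, hux⟩
    exact hmax ⟨u, hu, hsu, le_trans hux hsx⟩
  rcases lt_or_ge (t : List α) s with hlt | hge
  · -- t < s : s' < s ++ [x]
    left
    refine ⟨⟨hlen, i, hi, hrot⟩, ?_, hmax'⟩
    rw [hy]
    exact le_of_lt (lt_append (htlen.trans hslen.symm) hlt _ _)
  · have hteq : t = s := le_antisymm hts hge
    rcases le_or_gt y x with hyx | hxy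
    · left
      refine ⟨⟨hlen, i, hi, hrot⟩, ?_, hmax'⟩
      rw [hy, hteq]
      exact append_singleton_le hyx
    · right
      exact ⟨y, hxy, by rw [hy, hteq]⟩
end

section
/- Let v be a word of length n and let b be the lexicographically smallest element of a bracelet class of length n that encloses v. Then b can be written as v_{[1,i]} x φ for some 0 ≤ i < n, where x is a symbol strictly smaller than v_{i+1}, and φ is a word such that every rotation of (v_{[1,i]} x φ)^R is greater than v. -/
/-- The rotation orbit of a word. -/
def rotOrbit {α : Type*} (w : List α) : Set (List α) :=
  {u | ∃ r, u = w.rotate r}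

lemma lex_extract {α : Type*} [LinearOrder α] :
    ∀ (b v : List α), b.length = v.length → List.Lex (· < ·) b v →
    ∃ (i : ℕ) (hi : i < v.length) (x : α) (φ : List α),
      b = v.take i ++ [x] ++ φ ∧ x < v.get ⟨i, hi⟩ := by
  intro b v hlen h
  induction h with
  | nil => simp at hlen
  | @rel a l₁ c l₂ hac =>
      exact ⟨0, by simp, a, l₁, by simp, hac⟩
  | @cons a l₁ l₂ h ih =>
      obtain ⟨i, hi, x, φ, heq, hx⟩ := ih (by simpa using hlen)
      exact ⟨i + 1, by simpa using hi, x, φ, by simp [heq], hx⟩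

/-- The representative of a bracelet enclosing `v` has the form `v_{[1,i]} x φ` with
`x < v_{i+1}` and every rotation of the reversal greater than `v`. -/
theorem enclosing_bracelet_form {α : Type*} [Fintype α] [LinearOrder α]
    (n : ℕ) (v : List α) (hv : v.length = n)
    (w : List α) (hw : w.length = n)
    -- the bracelet of `w` encloses `v`:
    (a b' : List α)
    (ha : a ∈ rotOrbit w) (hamin : ∀ u ∈ rotOrbit w, a ≤ u)
    (hb' : b' ∈ rotOrbit w.reverse) (hbmin : ∀ u ∈ rotOrbit w.reverse, b' ≤ u)
    (hav : a < v) (hvb : v < b')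
    -- `b` is the lexicographically smallest element of the bracelet class:
    (b : List α) (hb : b ∈ rotOrbit w ∪ rotOrbit w.reverse)
    (hbleast : ∀ u ∈ rotOrbit w ∪ rotOrbit w.reverse, b ≤ u) :
    ∃ (i : ℕ) (hi : i < v.length) (x : α) (φ : List α),
      b = v.take i ++ [x] ++ φ ∧ x < v.get ⟨i, hi⟩ ∧
      ∀ r : ℕ, v < ((v.take i ++ [x] ++ φ).reverse).rotate r := by
  have hba : b ≤ a := hbleast a (Or.inl ha)
  have hbv : b < v := lt_of_le_of_lt hba hav
  -- b must be a rotation of w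
  have hbw : b ∈ rotOrbit w := by
    rcases hb with h | h
    · exact h
    · exact absurd (hbmin b h) (not_le.mpr (lt_trans hbv hvb))
  -- lengths
  obtain ⟨s, hs⟩ := hbw
  have hblen : b.length = v.length := by
    rw [hs, List.length_rotate, hw, hv]
  obtain ⟨i, hi, x, φ, heq, hx⟩ := lex_extract b v hblen hbv
  refine ⟨i, hi, x, φ, heq, hx, ?_⟩
  intro r
  rw [← heq, hs, List.reverse_rotate, List.rotate_rotate]
  exact lt_of_lt_of_le hvb (hbmin _ ⟨_, rfl⟩)
end

section
/- Let v be a word and suppose v_{[1,j]} x φ is the lexicographically smallest rotation of some word (e.g., the representative of a bracelet enclosing v), where x is a symbol. Let l be the length of the longest Lyndon word that is a prefix of v_{[1,j]}. Then x ≥ v_{((j mod l) + 1)}. -/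
/-!
The prefix `v.take j` has period `l`. At the first position `i ≥ l` breaking the period, a
larger letter would make `v.take (i + 1)` a Lyndon prefix longer than `l` (a periodic extension
of a Lyndon word by a larger letter is Lyndon), while a smaller letter would make the rotation
of the necklace by `i - i % l` smaller than the necklace. The same rotation argument at position
`j`, where the letter is `x`, gives `v[j % l] ≤ x`.
-/

/-- A Lyndon word: nonempty and strictly smaller than all of its proper rotations. -/
def IsLyndon {α : Type*} [LinearOrder α] (w : List α) : Prop :=
  w ≠ [] ∧ ∀ r : ℕ, 0 < r → r < w.length → w < w.rotate r

namespace List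

variable {α : Type*}

theorem getElem_rotate_of_add_lt {w : List α} {s i : ℕ} (h : s + i < w.length) :
    (w.rotate s)[i]'(by rw [length_rotate]; omega) = w[s + i] := by
  simp only [getElem_rotate, Nat.add_comm i s, Nat.mod_eq_of_lt h]

theorem getElem_rotate_of_length_le_add {w : List α} {s i : ℕ} (h : w.length ≤ s + i)
    (hi : i < w.length) (hs : s < w.length) :
    (w.rotate s)[i]'(by rw [length_rotate]; omega) = w[s + i - w.length] := by
  simp only [getElem_rotate, Nat.add_comm i s, Nat.mod_eq_sub_mod h,
    Nat.mod_eq_of_lt (by omega : s + i - w.length < w.length)]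

theorem lt_rotate_of_getElem_lt [LinearOrder α] {w : List α} {s d : ℕ} (h : s + d < w.length)
    (heq : ∀ i (hi : i < d), w[i] = w[s + i]) (hlt : w[d] < w[s + d]) : w < w.rotate s :=
  List.lt_iff_exists.mpr <| .inr ⟨d, by omega, by rw [length_rotate]; omega,
    fun i hi => by rw [heq i hi, getElem_rotate_of_add_lt],
    by rwa [getElem_rotate_of_add_lt h]⟩

theorem rotate_lt_of_getElem_lt [LinearOrder α] {w : List α} {s d : ℕ} (h : s + d < w.length)
    (heq : ∀ i (hi : i < d), w[s + i] = w[i]) (hlt : w[s + d] < w[d]) : w.rotate s < w :=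
  List.lt_iff_exists.mpr <| .inr ⟨d, by rw [length_rotate]; omega, by omega,
    fun i hi => by rw [← heq i hi, getElem_rotate_of_add_lt],
    by rwa [getElem_rotate_of_add_lt h]⟩

theorem getElem_mod_eq_of_hasPeriod_take {w : List α} {l k i : ℕ} (h : (w.take k).HasPeriod l)
    (hik : i < k) (hi : i < w.length) :
    w[i % l]'((Nat.mod_le i l).trans_lt hi) = w[i] := by
  have := hasPeriod_iff_forall_getElem?_mod.mp h i (by rw [length_take]; omega)
  rw [getElem?_take_of_lt hik, getElem?_take_of_lt ((Nat.mod_le i l).trans_lt hik),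
    getElem?_eq_getElem hi, getElem?_eq_getElem] at this
  exact (Option.some_inj.mp this).symm

theorem HasPeriod.take_succ {w : List α} {l i : ℕ} (h : (w.take i).HasPeriod l)
    (hi : i < w.length) (heq : w[i % l]'((Nat.mod_le i l).trans_lt hi) = w[i]) :
    (w.take (i + 1)).HasPeriod l := by
  rw [hasPeriod_iff_forall_getElem?_mod] at h ⊢
  intro m hm
  have hm : m < i + 1 := by rw [length_take] at hm; omega
  rw [getElem?_take_of_lt hm, getElem?_take_of_lt ((Nat.mod_le m l).trans_lt hm)]
  rcases Nat.lt_succ_iff_lt_or_eq.mp hm with hm | rfl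
  · simpa [getElem?_take_of_lt hm, getElem?_take_of_lt ((Nat.mod_le m l).trans_lt hm)]
      using h m (by rw [length_take]; omega)
  · rw [getElem?_eq_getElem hi, getElem?_eq_getElem ((Nat.mod_le m l).trans_lt hi), heq]

end List

section

open List

variable {α : Type*} [LinearOrder α]

theorem IsLyndon.exists_lt_shift {u : List α} (hu : IsLyndon u) {k : ℕ}
    (hk0 : 0 < k) (hk : k < u.length) :
    ∃ m, ∃ _ : k + m < u.length, (∀ i (hi : i < m), u[i] = u[k + i]) ∧ u[m] < u[k + m] := by
  obtain ⟨-, hlen⟩ | ⟨d, hd, _, heq, hlt⟩ := List.lt_iff_exists.mp (hu.2 k hk0 hk)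
  · simp at hlen
  by_cases hkd : k + d < u.length
  · refine ⟨d, hkd, fun i hi => ?_, ?_⟩
    · rw [heq i hi, getElem_rotate_of_add_lt (by omega)]
    · rwa [getElem_rotate_of_add_lt hkd] at hlt
  · -- otherwise `u.drop k` is a border of `u`, and the rotation by `u.length - k` is smaller
    have hrot : u.rotate (u.length - k) < u := by
      refine rotate_lt_of_getElem_lt (d := k + d - u.length) (by omega) (fun i hi => ?_) ?_
      · have := heq (u.length - k + i) (by omega)
        rw [getElem_rotate_of_length_le_add (by omega) (by omega) hk] at this
        simpa only [show k + (u.length - k + i) - u.length = i by omega] using this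
      · rw [getElem_rotate_of_length_le_add (by omega) hd hk] at hlt
        simpa only [show u.length - k + (k + d - u.length) = d by omega] using hlt
    exact absurd hrot (List.lt_asymm (hu.2 _ (by omega) (by omega)))

theorem IsLyndon.exists_lt_shift_of_periodic {w : List α} {l s t : ℕ}
    (hu : IsLyndon (w.take l)) (hs0 : 0 < s) (hn : s + t < w.length)
    (per : ∀ i (hi : i < s + t), w[i % l]'((Nat.mod_le i l).trans_lt (by omega)) = w[i])
    (hlt : w[(s + t) % l]'((Nat.mod_le _ l).trans_lt hn) < w[s + t]) :
    ∃ d, ∃ _ : d ≤ t, (∀ i (hi : i < d), w[i] = w[s + i]) ∧ w[d] < w[s + d] := by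
  have hl0 : 0 < l := Nat.pos_of_ne_zero fun h => hu.1 (by simp [h])
  have hln : l ≤ s + t := by
    by_contra! h
    simp only [Nat.mod_eq_of_lt h] at hlt
    exact lt_irrefl _ hlt
  rcases Nat.eq_zero_or_pos (s % l) with hc | hc
  · refine ⟨t, le_rfl, fun i hi => ?_, ?_⟩
    · rw [← per i (by omega), ← per (s + i) (by omega)]
      simp only [Nat.add_mod s, hc, Nat.zero_add, Nat.mod_mod]
    · rw [← per t (by omega)]
      simpa only [Nat.add_mod s, hc, Nat.zero_add, Nat.mod_mod] using hlt
  · obtain ⟨m, hm, hagree, hmlt⟩ :=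
      hu.exists_lt_shift hc (by rw [length_take]; have := Nat.mod_lt s hl0; omega)
    simp only [getElem_take] at hagree hmlt
    have hm : s % l + m < l := by rw [length_take] at hm; omega
    have hshift : ∀ i (hi : s % l + i < l),
        w[(s + i) % l]'((Nat.mod_lt _ hl0).trans_le (by omega)) = w[s % l + i] :=
      fun i hi => by
        simp only [Nat.add_mod s i, Nat.mod_eq_of_lt (show i < l by omega), Nat.mod_eq_of_lt hi]
    rcases lt_or_ge m t with hmt | htm
    · refine ⟨m, by omega, fun i hi => ?_, ?_⟩
      · rw [hagree i hi, ← hshift i (by omega), per (s + i) (by omega)]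
      · rwa [← per (s + m) (by omega), hshift m hm]
    · refine ⟨t, le_rfl, fun i hi => ?_, lt_of_le_of_lt ?_ hlt⟩
      · rw [hagree i (by omega), ← hshift i (by omega), per (s + i) (by omega)]
      · rw [hshift t (by omega)]
        rcases htm.lt_or_eq with h | rfl
        · exact (hagree t h).le
        · exact hmlt.le

theorem IsLyndon.take_succ_of_hasPeriod {w : List α} {l n : ℕ}
    (hu : IsLyndon (w.take l)) (hper : (w.take n).HasPeriod l) (hn : n < w.length)
    (hlt : w[n % l]'((Nat.mod_le n l).trans_lt hn) < w[n]) : IsLyndon (w.take (n + 1)) := by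
  refine ⟨ne_nil_of_length_pos (by rw [length_take]; omega), fun s hs0 hs => ?_⟩
  obtain ⟨t, rfl⟩ : ∃ t, n = s + t := ⟨n - s, by rw [length_take] at hs; omega⟩
  obtain ⟨d, hd, heq, hlt⟩ := hu.exists_lt_shift_of_periodic hs0 hn
    (fun i hi => getElem_mod_eq_of_hasPeriod_take hper hi (by omega)) hlt
  exact lt_rotate_of_getElem_lt (d := d) (by rw [length_take]; omega)
    (fun i hi => by simp [heq i hi]) (by simpa using hlt)

theorem getElem_mod_le_of_forall_le_rotate {w : List α} {l k : ℕ}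
    (hmin : ∀ r, w ≤ w.rotate r) (hper : (w.take k).HasPeriod l) (hk : k < w.length) :
    w[k % l]'((Nat.mod_le k l).trans_lt hk) ≤ w[k] := by
  by_contra! hlt
  have hr : k - k % l + k % l = k := Nat.sub_add_cancel (Nat.mod_le k l)
  refine (hmin (k - k % l)).not_gt
    (rotate_lt_of_getElem_lt (d := k % l) (by omega) (fun i hi => ?_) ?_)
  · have hmul : k - k % l = l * (k / l) := by have := Nat.div_add_mod k l; omega
    rw [← getElem_mod_eq_of_hasPeriod_take hper (i := k - k % l + i) (by omega) (by omega),
      ← getElem_mod_eq_of_hasPeriod_take hper (i := i) (by omega) (by omega)]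
    simp only [hmul, Nat.mul_add_mod]
  · simp only [hr]; exact hlt

theorem hasPeriod_take_of_maximal_isLyndon_take {w : List α} {l j : ℕ}
    (hmin : ∀ r, w ≤ w.rotate r) (hj : j ≤ w.length) (hu : IsLyndon (w.take l))
    (hmax : ∀ m, 0 < m → m ≤ j → IsLyndon (w.take m) → m ≤ l) :
    (w.take j).HasPeriod l := by
  suffices ∀ i ≤ j, (w.take i).HasPeriod l from this j le_rfl
  intro i
  induction i with
  | zero => intro _; simp
  | succ i ih =>
    intro hi
    have hper := ih (by omega)
    refine hper.take_succ (by omega)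
      (le_antisymm (getElem_mod_le_of_forall_le_rotate hmin hper (by omega)) ?_)
    by_contra! hlt
    have hle := hmax (i + 1) (by omega) hi (hu.take_succ_of_hasPeriod hper (by omega) hlt)
    simp only [Nat.mod_eq_of_lt (by omega : i < l)] at hlt
    exact lt_irrefl _ hlt

end

theorem enclosing_symbol_lower_bound_general {α : Type*} [LinearOrder α]
    (v : List α) (j l : ℕ) (hjv : j ≤ v.length)
    (hl0 : 0 < l) (hlj : l ≤ j)
    (hLyndon : IsLyndon (v.take l))
    (hlongest : ∀ m : ℕ, 0 < m → m ≤ j → IsLyndon (v.take m) → m ≤ l)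
    (x : α) (φ : List α)
    (hmin : ∀ r : ℕ, (v.take j ++ x :: φ) ≤ (v.take j ++ x :: φ).rotate r) :
    v.get ⟨j % l, lt_of_lt_of_le (Nat.mod_lt j hl0) (le_trans hlj hjv)⟩ ≤ x := by
  set w := v.take j ++ x :: φ
  have htake : ∀ m ≤ j, w.take m = v.take m := fun m hm => by
    simp [w, List.take_append_of_le_length, hjv, hm, List.take_take]
  have hj : j < w.length := by
    simp only [w, List.length_append, List.length_take, List.length_cons]; omega
  have hper := hasPeriod_take_of_maximal_isLyndon_take hmin hj.le (htake l hlj ▸ hLyndon)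
    fun m hm0 hmj hm => hlongest m hm0 hmj (htake m hmj ▸ hm)
  have hle := getElem_mod_le_of_forall_le_rotate hmin hper hj
  have hlen : (v.take j).length = j := List.length_take_of_le hjv
  simpa [w, List.getElem_append, hlen, (Nat.mod_lt j hl0).trans_le hlj] using hle

/-- If `v.take j ++ x :: φ` is the lexicographically least rotation of itself and `l` is
the length of the longest Lyndon prefix of `v.take j`, then `x ≥ v_{(j mod l) + 1}`. -/
theorem enclosing_symbol_lower_bound {α : Type*} [Fintype α] [LinearOrder α]
    (v : List α) (j l : ℕ) (hj0 : 0 < j) (hjv : j ≤ v.length)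
    (hl0 : 0 < l) (hlj : l ≤ j)
    (hLyndon : IsLyndon (v.take l))
    (hlongest : ∀ m : ℕ, 0 < m → m ≤ j → IsLyndon (v.take m) → m ≤ l)
    (x : α) (φ : List α)
    (hmin : ∀ r : ℕ, (v.take j ++ x :: φ) ≤ (v.take j ++ x :: φ).rotate r) :
    v.get ⟨j % l, lt_of_lt_of_le (Nat.mod_lt j hl0) (le_trans hlj hjv)⟩ ≤ x :=
  enclosing_symbol_lower_bound_general v j l hjv hl0 hlj hLyndon hlongest x φ hmin
end
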